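/- There exists a unique linear map X : ℚ^6 → ℚ^6 that fixes each of the vectors b, c, f, d1, d2, e2, g1 and swaps e1 with g2; moreover this map is given by X(λ1, λ2, μ1, μ2, ν1, ν2) = (λ1 + μ1 − ν2, λ2 + μ1 − ν2, ν2, μ2, ν1, μ1). -/
import Mathlib


/- The nine ray generators, as vectors of `ℚ^6` in coordinates `(λ1, λ2, μ1, μ2, ν1, ν2)`. -/
def b  : Fin 6 → ℚ := ![2,1,2,1,3,2]
def c  : Fin 6 → ℚ := ![1,1,1,1,2,1]
def f  : Fin 6 → ℚ := ![1,0,1,0,1,1]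
def d1 : Fin 6 → ℚ := ![1,1,1,0,1,1]
def e1 : Fin 6 → ℚ := ![1,1,0,0,1,1]
def g1 : Fin 6 → ℚ := ![1,0,0,0,1,0]
def d2 : Fin 6 → ℚ := ![1,0,1,1,1,1]
def e2 : Fin 6 → ℚ := ![0,0,1,1,1,1]
def g2 : Fin 6 → ℚ := ![0,0,1,0,1,0]

/-- `F` fixes `b, c, f, d1, d2, e2, g1` and swaps `e1` with `g2`. -/
def Cond (F : (Fin 6 → ℚ) →ₗ[ℚ] (Fin 6 → ℚ)) : Prop :=
  F b = b ∧ F c = c ∧ F f = f ∧ F d1 = d1 ∧ F d2 = d2 ∧ F e2 = e2 ∧ F g1 = g1 ∧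
    F e1 = g2 ∧ F g2 = e1



@[simp] lemma cons_val_five {α : Type*} (a0 a1 a2 a3 a4 a5 : α) :
    ![a0,a1,a2,a3,a4,a5] 5 = a5 := rfl

def Xmap : (Fin 6 → ℚ) →ₗ[ℚ] (Fin 6 → ℚ) where
  toFun p := ![p 0 + p 2 - p 5, p 1 + p 2 - p 5, p 5, p 3, p 4, p 2]
  map_add' p q := by
    funext i; fin_cases i <;>
      simp [Matrix.cons_val_succ] <;> ring
  map_smul' a p := by
    funext i; fin_cases i <;>
      simp [Matrix.cons_val_succ] <;> ring

lemma condX : Cond Xmap := by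
  refine ⟨?_, ?_, ?_, ?_, ?_, ?_, ?_, ?_, ?_⟩ <;>
    (funext i; fin_cases i <;>
      simp [Xmap, b, c, f, d1, e1, g1, d2, e2, g2, Matrix.cons_val_succ] <;> norm_num)

lemma decomp (p : Fin 6 → ℚ) :
    p = (-p 0 - p 1 - p 3 + p 4 + p 5) • b + (p 1 + p 3 - p 5) • c +
        (p 0 + p 1 + p 2 - p 4 - p 5) • d1 + (-p 2 + p 5) • e1 +
        (p 0 - p 5) • g1 + (p 0 + p 3 - p 4) • d2 := by
  funext i; fin_cases i <;>
    simp [b, c, d1, e1, g1, d2, Matrix.cons_val_succ] <;> ring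

lemma cond_formula (F : (Fin 6 → ℚ) →ₗ[ℚ] (Fin 6 → ℚ)) (h : Cond F) (p : Fin 6 → ℚ) :
    F p = ![p 0 + p 2 - p 5, p 1 + p 2 - p 5, p 5, p 3, p 4, p 2] := by
  obtain ⟨hb, hc, hf, hd1, hd2, he2, hg1, he1, hg2⟩ := h
  conv_lhs => rw [decomp p]
  simp only [map_add, map_smul, hb, hc, hd1, hd2, hg1, he1]
  funext i; fin_cases i <;>
    simp [b, c, d1, g1, d2, g2, Matrix.cons_val_succ] <;> ring

theorem exists_unique_X_and_formula :
    (∃! F : (Fin 6 → ℚ) →ₗ[ℚ] (Fin 6 → ℚ), Cond F) ∧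
      ∀ F : (Fin 6 → ℚ) →ₗ[ℚ] (Fin 6 → ℚ), Cond F →
        ∀ p : Fin 6 → ℚ,
          F p = ![p 0 + p 2 - p 5, p 1 + p 2 - p 5, p 5, p 3, p 4, p 2] := by
  refine ⟨⟨Xmap, condX, fun F hF => ?_⟩, fun F hF p => cond_formula F hF p⟩
  apply LinearMap.ext fun p => ?_
  rw [cond_formula F hF p, cond_formula Xmap condX p]
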